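/- Let A be a Banach *-algebra of the form C₀(U, L¹(ℝᵈ)) where U is a locally compact Hausdorff space. Then every nonzero irreducible *-representation π of A on a Hilbert space factors through evaluation at some point x ∈ U followed by an irreducible *-representation of L¹(ℝᵈ). Consequently the enveloping C*-algebra of C₀(U, L¹(ℝᵈ)) is C₀(U, C*(ℝᵈ)). -/

import Mathlib

/-!
Call `x` a support point of `π` if `π` does not vanish on the functions supported in any
neighbourhood of `x`. Such a point exists: otherwise a partition of unity subordinate to a cover
by neighbourhoods on which `π` vanishes writes every `f`, up to an arbitrarily small error, as a
sum of functions killed by `π`. If `g` vanishes near a support point `x`, then `g` annihilates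
the left ideal `J` of functions supported where `g = 0`, and `π J ≠ 0`; the closed span of
`π(J) H` is a nonzero closed invariant subspace, hence all of `H`, and `π g` kills it. A function
vanishing at `x` is a uniform limit of functions vanishing near `x`, so `π` kills the kernel of
evaluation at `x` and descends to a representation `ρ` of `B`. It is contractive because every
`b` is `f x` for some `f` with `‖f‖ ≤ ‖b‖`, and irreducible because it has the same invariant
subspaces as `π`.
-/

open Filter Topology Set
open scoped CompactlySupported ZeroAtInfty

namespace CompactlySupportedContinuousMap

variable {α β R : Type*} [TopologicalSpace α] [TopologicalSpace β] [Zero β]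
  [TopologicalSpace R] [Zero R] [SMulWithZero R β] [ContinuousSMul R β]

variable {F : Type*} [FunLike F α β] [ContinuousMapClass F α β]

def cutoff (φ : C_c(α, R)) (f : F) : C_c(α, β) where
  toFun u := φ u • f u
  continuous_toFun := (map_continuous φ).smul (map_continuous f)
  hasCompactSupport' := φ.hasCompactSupport.smul_right

@[simp]
lemma cutoff_apply (φ : C_c(α, R)) (f : F) (u : α) : φ.cutoff f u = φ u • f u := rfl

lemma tsupport_cutoff_subset (φ : C_c(α, R)) (f : F) : tsupport (φ.cutoff f) ⊆ tsupport φ :=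
  tsupport_smul_subset_left _ _

lemma exists_eventuallyEq_one_of_mem_nhds {U : Type*} [TopologicalSpace U]
    [LocallyCompactSpace U] [T2Space U] {x : U} {W : Set U} (hW : W ∈ 𝓝 x) :
    ∃ φ : C_c(U, ℝ), (∀ᶠ u in 𝓝 x, φ u = 1) ∧ (∀ u ∉ W, φ u = 0) ∧ ∀ u, φ u ∈ Icc (0 : ℝ) 1 := by
  obtain ⟨K, hKx, hKW, hK⟩ := local_compact_nhds (interior_mem_nhds.mpr hW)
  obtain ⟨φ, hφK, hφW, hφc, hφ01⟩ := exists_continuous_one_zero_of_isCompact hK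
    isOpen_interior.isClosed_compl (disjoint_compl_right_iff_subset.mpr hKW)
  exact ⟨⟨φ, hφc⟩, eventually_of_mem hKx hφK, fun u hu => hφW fun h => hu (interior_subset h),
    hφ01⟩

end CompactlySupportedContinuousMap

lemma norm_smul_le_of_mem_Icc {E : Type*} [SeminormedAddCommGroup E] [NormedSpace ℝ E] {t : ℝ}
    (ht : t ∈ Icc (0 : ℝ) 1) (v : E) : ‖t • v‖ ≤ ‖v‖ := by
  rw [norm_smul, Real.norm_of_nonneg ht.1]
  exact mul_le_of_le_one_left (norm_nonneg v) ht.2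

namespace ZeroAtInftyContinuousMap

section Normed

variable {U B : Type*} [TopologicalSpace U] [NormedAddCommGroup B]

lemma dist_le_iff {f g : C₀(U, B)} {C : ℝ} (hC : 0 ≤ C) :
    dist f g ≤ C ↔ ∀ u, dist (f u) (g u) ≤ C := by
  rw [← dist_toBCF_eq_dist]
  exact BoundedContinuousFunction.dist_le hC

lemma isCompact_setOf_le_norm (f : C₀(U, B)) {ε : ℝ} (hε : 0 < ε) :
    IsCompact {u | ε ≤ ‖f u‖} := by
  obtain ⟨K, hK, hKf⟩ := mem_cocompact.mp (zero_at_infty f (Metric.ball_mem_nhds 0 hε))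
  refine hK.of_isClosed_subset (isClosed_le continuous_const (map_continuous f).norm) ?_
  intro u hu
  by_contra huK
  simp [not_le.mpr (mem_ball_zero_iff.mp (hKf huK))] at hu

lemma coe_sum {ι : Type*} (s : Finset ι) (g : ι → C₀(U, B)) :
    ⇑(∑ i ∈ s, g i) = ∑ i ∈ s, ⇑(g i) :=
  map_sum (⟨⟨DFunLike.coe, coe_zero⟩, coe_add⟩ : C₀(U, B) →+ U → B) g s

variable [LocallyCompactSpace U] [T2Space U] [NormedSpace ℝ B]

lemma exists_apply_eq_norm_le (x : U) (b : B) : ∃ f : C₀(U, B), f x = b ∧ ‖f‖ ≤ ‖b‖ := by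
  obtain ⟨φ, hφx, -, hφ01⟩ :=
    CompactlySupportedContinuousMap.exists_eventuallyEq_one_of_mem_nhds (x := x) univ_mem
  refine ⟨(φ.cutoff (ContinuousMap.const U b) : C₀(U, B)), by simp [hφx.self_of_nhds], ?_⟩
  rw [← norm_toBCF_eq_norm, BoundedContinuousFunction.norm_le (norm_nonneg b)]
  exact fun u => norm_smul_le_of_mem_Icc (hφ01 u) b

lemma mem_closure_eventuallyEq_zero {x : U} {g : C₀(U, B)} (hg : g x = 0) :
    g ∈ closure {h : C₀(U, B) | ∀ᶠ u in 𝓝 x, h u = 0} := by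
  refine Metric.mem_closure_iff.mpr fun ε hε => ?_
  have hW : {u | ‖g u‖ < ε / 2} ∈ 𝓝 x :=
    (isOpen_lt (map_continuous g).norm continuous_const).mem_nhds (by simpa [hg])
  obtain ⟨φ, hφx, hφW, hφ01⟩ :=
    CompactlySupportedContinuousMap.exists_eventuallyEq_one_of_mem_nhds hW
  refine ⟨g - (φ.cutoff g : C₀(U, B)), hφx.mono fun u hu => by simp [hu], ?_⟩
  refine ((dist_le_iff (by positivity)).mpr fun u => ?_).trans_lt (half_lt_self hε)
  rw [dist_eq_norm, sub_apply, sub_sub_cancel]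
  change ‖φ u • g u‖ ≤ ε / 2
  by_cases hu : u ∈ {u | ‖g u‖ < ε / 2}
  · exact (norm_smul_le_of_mem_Icc (hφ01 u) (g u)).trans hu.le
  · simp [hφW u hu]
    positivity

lemma dense_addSubmonoidClosure_tsupport_subset {ι : Type*} (V : ι → Set U)
    (hV : ∀ x, ∃ i, V i ∈ 𝓝 x) :
    Dense (AddSubmonoid.closure {g : C₀(U, B) | ∃ i, tsupport g ⊆ V i} : Set C₀(U, B)) := by
  refine fun f => Metric.mem_closure_iff.mpr fun ε hε => ?_
  set C := {u | ε / 2 ≤ ‖f u‖}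
  have hC : IsCompact C := f.isCompact_setOf_le_norm (half_pos hε)
  obtain ⟨t, ht⟩ := hC.elim_finite_subcover (fun i => interior (V i)) (fun i => isOpen_interior)
    fun u _ => mem_iUnion.mpr ((hV u).imp fun i => mem_interior_iff_mem_nhds.mpr)
  obtain ⟨p, hpV, hpc⟩ := PartitionOfUnity.exists_isSubordinate_of_locallyFinite_t2space hC
    (fun i : t => interior (V i)) (fun i => isOpen_interior) (locallyFinite_of_finite _)
    (by simpa [iUnion_subtype] using ht)
  let g : t → C₀(U, B) := fun i =>
    (CompactlySupportedContinuousMap.cutoff ⟨p i, hpc i⟩ f : C₀(U, B))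
  refine ⟨∑ i, g i, sum_mem fun i _ => AddSubmonoid.subset_closure ⟨i, ?_⟩, ?_⟩
  · exact (CompactlySupportedContinuousMap.tsupport_cutoff_subset _ _).trans
      ((hpV i).trans interior_subset)
  refine ((dist_le_iff (half_pos hε).le).mpr fun u => ?_).trans_lt (half_lt_self hε)
  have hsum : (∑ i, g i) u = (∑ i, p i u) • f u := by
    rw [coe_sum, Finset.sum_apply, Finset.sum_smul]
    rfl
  have hp : ∑ i, p i u = ∑ᶠ i, p i u := (finsum_eq_sum_of_fintype _).symm
  rw [dist_eq_norm, hsum, ← one_smul ℝ (f u), smul_smul, mul_one, ← sub_smul]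
  by_cases hu : u ∈ C
  · rw [hp, p.sum_eq_one hu, sub_self, zero_smul, norm_zero]
    positivity
  · have h01 : 1 - ∑ i, p i u ∈ Icc (0 : ℝ) 1 := by
      rw [hp]
      exact ⟨sub_nonneg.mpr (p.sum_le_one u), sub_le_self _ (p.sum_nonneg u)⟩
    exact (norm_smul_le_of_mem_Icc h01 (f u)).trans (not_le.mp hu).le

end Normed

variable {R U β : Type*} [TopologicalSpace U] [Semiring R] [TopologicalSpace β]
  [NonUnitalNonAssocSemiring β] [IsTopologicalSemiring β] [StarRing β] [ContinuousStar β]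
  [Module R β] [ContinuousConstSMul R β]

variable (R) in
@[simps]
def evalNonUnitalStarAlgHom (x : U) : C₀(U, β) →⋆ₙₐ[R] β where
  toFun f := f x
  map_smul' _ _ := rfl
  map_zero' := rfl
  map_add' _ _ := rfl
  map_mul' _ _ := rfl
  map_star' _ := rfl

end ZeroAtInftyContinuousMap

namespace NonUnitalStarAlgHom

variable {R A B C : Type*} [Monoid R] [NonUnitalRing A] [DistribMulAction R A] [Star A]
  [NonUnitalRing B] [DistribMulAction R B] [Star B]
  [NonUnitalRing C] [DistribMulAction R C] [Star C]
  (π : A →⋆ₙₐ[R] C) (e : A →⋆ₙₐ[R] B) (he : Function.Surjective e) (hker : ∀ a, e a = 0 → π a = 0)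

include hker in
lemma apply_eq_apply_of_ker_le {a a' : A} (h : e a = e a') : π a = π a' := by
  rw [← sub_eq_zero, ← map_sub]
  exact hker _ (by rw [map_sub, h, sub_self])

open Function in
noncomputable def liftOfSurjective : B →⋆ₙₐ[R] C where
  toFun b := π (surjInv he b)
  map_smul' r b :=
    (π.apply_eq_apply_of_ker_le e hker (by simp only [map_smul, surjInv_eq he]; rfl)).trans
      (map_smul π _ _)
  map_zero' :=
    (π.apply_eq_apply_of_ker_le e hker (by simp only [map_zero, surjInv_eq he])).trans (map_zero π)
  map_add' b c :=
    (π.apply_eq_apply_of_ker_le e hker (by simp only [map_add, surjInv_eq he])).trans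
      (map_add π _ _)
  map_mul' b c :=
    (π.apply_eq_apply_of_ker_le e hker (by simp only [map_mul, surjInv_eq he])).trans
      (map_mul π _ _)
  map_star' b :=
    (π.apply_eq_apply_of_ker_le e hker (by simp only [map_star, surjInv_eq he])).trans
      (map_star π _)

lemma liftOfSurjective_apply (a : A) : π.liftOfSurjective e he hker (e a) = π a :=
  π.apply_eq_apply_of_ker_le e hker (Function.surjInv_eq he _)

end NonUnitalStarAlgHom

section Irreducible

variable {𝕜 H : Type*} [NormedField 𝕜] [NormedAddCommGroup H] [NormedSpace 𝕜 H]

def IsTopologicallyIrreducible {A : Type*} (π : A → H →L[𝕜] H) : Prop :=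
  ∀ K : Submodule 𝕜 H, IsClosed (K : Set H) → (∀ a, ∀ v ∈ K, π a v ∈ K) → K = ⊥ ∨ K = ⊤

theorem IsTopologicallyIrreducible.map_eq_zero_of_mul_eq_zero {A F : Type*}
    [NonUnitalNonAssocSemiring A] [FunLike F A (H →L[𝕜] H)]
    [NonUnitalRingHomClass F A (H →L[𝕜] H)] {π : F} (hπ : IsTopologicallyIrreducible π)
    {J : Set A} (hJ : ∀ a, ∀ h ∈ J, a * h ∈ J) (hJπ : ∃ h ∈ J, π h ≠ 0) {g : A}
    (hg : ∀ h ∈ J, g * h = 0) : π g = 0 := by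
  set K := (Submodule.span 𝕜 (⋃ h ∈ J, range (π h))).topologicalClosure
  have hclosure_le : ∀ K' : Submodule 𝕜 H, IsClosed (K' : Set H) →
      (∀ h ∈ J, ∀ v, π h v ∈ K') → K ≤ K' := fun K' hK' hJK' =>
    Submodule.topologicalClosure_minimal _
      (Submodule.span_le.mpr <| iUnion₂_subset fun h hh => range_subset_iff.mpr (hJK' h hh)) hK'
  have hmem : ∀ h ∈ J, ∀ v, π h v ∈ K := fun h hh v =>
    Submodule.le_topologicalClosure _ (Submodule.subset_span (mem_biUnion hh (mem_range_self v)))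
  have hKc : IsClosed (K : Set H) := Submodule.isClosed_topologicalClosure _
  have hinv : ∀ a, ∀ v ∈ K, π a v ∈ K := fun a =>
    hclosure_le (K.comap (π a : H →ₗ[𝕜] H)) (hKc.preimage (π a).continuous)
      fun h hh v => by simpa using hmem _ (hJ a h hh) v
  obtain ⟨h, hh, hπh⟩ := hJπ
  obtain ⟨v, hv⟩ := DFunLike.ne_iff.mp hπh
  have hK : K = ⊤ := (hπ K hKc hinv).resolve_left fun hK =>
    hv (by simpa [hK] using hmem h hh v)
  have hker : K ≤ LinearMap.ker (π g : H →ₗ[𝕜] H) := hclosure_le _ (π g).isClosed_ker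
    fun h hh v => by simpa [hg h hh] using congr($(map_mul π g h) v).symm
  ext w
  simpa using hker (hK ▸ Submodule.mem_top : w ∈ K)

end Irreducible

namespace ZeroAtInftyContinuousMap

variable {U B E F : Type*} [TopologicalSpace U] [NormedAddCommGroup B]

def IsSupportPoint [Zero E] (T : C₀(U, B) → E) (x : U) : Prop :=
  ∀ V ∈ 𝓝 x, ∃ f : C₀(U, B), tsupport f ⊆ V ∧ T f ≠ 0

theorem exists_isSupportPoint [LocallyCompactSpace U] [T2Space U] [NormedSpace ℝ B]
    [AddCommMonoid E] [TopologicalSpace E] [T2Space E] [FunLike F C₀(U, B) E]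
    [AddMonoidHomClass F C₀(U, B) E] (T : F) (hT : Continuous T) (hT0 : ∃ f, T f ≠ 0) :
    ∃ x, IsSupportPoint T x := by
  by_contra! h
  simp only [IsSupportPoint, not_forall, not_exists, not_and, not_not] at h
  choose V hV hVT using h
  have hker : AddSubmonoid.closure {g : C₀(U, B) | ∃ x, tsupport g ⊆ V x} ≤ AddMonoidHom.mker T :=
    AddSubmonoid.closure_le.mpr fun g ⟨x, hg⟩ => hVT x g hg
  obtain ⟨f, hf⟩ := hT0
  exact hf (congrFun (hT.ext_on (dense_addSubmonoidClosure_tsupport_subset V fun x => ⟨x, hV x⟩)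
    continuous_const hker) f)

section Representation

variable {𝕜 H : Type*} [NormedField 𝕜] [NormedAddCommGroup H] [NormedSpace 𝕜 H]
  {B : Type*} [NonUnitalNormedRing B]
  [FunLike F C₀(U, B) (H →L[𝕜] H)] [NonUnitalRingHomClass F C₀(U, B) (H →L[𝕜] H)]
  {π : F} {x : U}

theorem IsSupportPoint.map_eq_zero_of_eventuallyEq_zero (hπ : IsTopologicallyIrreducible π)
    (hx : IsSupportPoint π x) {g : C₀(U, B)} (hg : ∀ᶠ u in 𝓝 x, g u = 0) : π g = 0 := by
  refine hπ.map_eq_zero_of_mul_eq_zero (J := {h | tsupport h ⊆ {u | g u = 0}})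
    (fun a h hh => tsupport_mul_subset_right.trans hh) (hx _ hg) fun h hh => ext fun u => ?_
  by_cases hu : u ∈ tsupport h
  · rw [mul_apply, show g u = 0 from hh hu, zero_mul, zero_apply]
  · simp [image_eq_zero_of_notMem_tsupport hu]

theorem IsSupportPoint.map_eq_zero_of_apply_eq_zero [LocallyCompactSpace U] [T2Space U]
    [NormedSpace ℝ B] (hcont : Continuous π) (hπ : IsTopologicallyIrreducible π)
    (hx : IsSupportPoint π x) {g : C₀(U, B)} (hg : g x = 0) : π g = 0 :=
  closure_minimal (fun _ h => hx.map_eq_zero_of_eventuallyEq_zero hπ h)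
    (isClosed_eq hcont continuous_const) (mem_closure_eventuallyEq_zero hg)

end Representation

end ZeroAtInftyContinuousMap

theorem irreducible_rep_of_C0_factors_general
    {U : Type*} [TopologicalSpace U] [LocallyCompactSpace U] [T2Space U]
    {B : Type*} [NonUnitalNormedRing B] [StarRing B] [NormedStarGroup B]
    [NormedSpace ℂ B]
    {H : Type*} [NormedAddCommGroup H] [InnerProductSpace ℂ H] [CompleteSpace H]
    (π : ZeroAtInftyContinuousMap U B →⋆ₙₐ[ℂ] (H →L[ℂ] H))
    -- `*`-representations of a Banach `*`-algebra are norm-decreasing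
    (hcontr : ∀ f, ‖π f‖ ≤ ‖f‖)
    (hnz : ∃ f, π f ≠ 0)
    -- irreducibility: no nontrivial closed invariant subspaces
    (hirr : ∀ K : Submodule ℂ H, IsClosed (K : Set H) →
      (∀ f, ∀ v ∈ K, π f v ∈ K) → K = ⊥ ∨ K = ⊤) :
    ∃ x : U, ∃ ρ : B →⋆ₙₐ[ℂ] (H →L[ℂ] H),
      (∀ b, ‖ρ b‖ ≤ ‖b‖) ∧
      (∀ K : Submodule ℂ H, IsClosed (K : Set H) →
        (∀ b, ∀ v ∈ K, ρ b v ∈ K) → K = ⊥ ∨ K = ⊤) ∧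
      ∀ f, π f = ρ (f x) := by
  have hcont : Continuous π := AddMonoidHomClass.continuous_of_bound π 1 (by simpa using hcontr)
  obtain ⟨x, hx⟩ := ZeroAtInftyContinuousMap.exists_isSupportPoint π hcont hnz
  have hlift := ZeroAtInftyContinuousMap.exists_apply_eq_norm_le (B := B) x
  let ρ := π.liftOfSurjective (ZeroAtInftyContinuousMap.evalNonUnitalStarAlgHom ℂ x)
    (fun b => (hlift b).imp fun _ => And.left)
    (fun _ => hx.map_eq_zero_of_apply_eq_zero hcont hirr)
  have hρ : ∀ f, ρ (f x) = π f := π.liftOfSurjective_apply _ _ _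
  refine ⟨x, ρ, fun b => ?_, fun K hK hinv => hirr K hK fun f v hv => hρ f ▸ hinv _ v hv,
    fun f => (hρ f).symm⟩
  obtain ⟨f, rfl, hf⟩ := hlift b
  rw [hρ]
  exact (hcontr f).trans hf

/-- Every nonzero irreducible `*`-representation of the Banach `*`-algebra
`C₀(U, B)` (with `B` playing the role of `L¹(ℝᵈ)`) on a Hilbert space factors through
evaluation at some point `x ∈ U` followed by an irreducible `*`-representation of `B`;
this is the key step showing that the enveloping C*-algebra of `C₀(U, L¹(ℝᵈ))` is
`C₀(U, C*(ℝᵈ))`. -/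
theorem irreducible_rep_of_C0_factors
    {U : Type*} [TopologicalSpace U] [LocallyCompactSpace U] [T2Space U]
    {B : Type*} [NonUnitalNormedRing B] [StarRing B] [NormedStarGroup B]
    [NormedSpace ℂ B] [IsScalarTower ℂ B B] [SMulCommClass ℂ B B] [StarModule ℂ B]
    {H : Type*} [NormedAddCommGroup H] [InnerProductSpace ℂ H] [CompleteSpace H]
    (π : ZeroAtInftyContinuousMap U B →⋆ₙₐ[ℂ] (H →L[ℂ] H))
    -- `*`-representations of a Banach `*`-algebra are norm-decreasing
    (hcontr : ∀ f, ‖π f‖ ≤ ‖f‖)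
    (hnz : ∃ f, π f ≠ 0)
    -- irreducibility: no nontrivial closed invariant subspaces
    (hirr : ∀ K : Submodule ℂ H, IsClosed (K : Set H) →
      (∀ f, ∀ v ∈ K, π f v ∈ K) → K = ⊥ ∨ K = ⊤) :
    ∃ x : U, ∃ ρ : B →⋆ₙₐ[ℂ] (H →L[ℂ] H),
      (∀ b, ‖ρ b‖ ≤ ‖b‖) ∧
      (∀ K : Submodule ℂ H, IsClosed (K : Set H) →
        (∀ b, ∀ v ∈ K, ρ b v ∈ K) → K = ⊥ ∨ K = ⊤) ∧
      ∀ f, π f = ρ (f x) :=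
  irreducible_rep_of_C0_factors_general π hcontr hnz hirr
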